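/- Let Z be a real symmetric trace-free n×n matrix, let Φ be a 𝔤-valued 2-form, and suppose γ ≥ 0 is a constant such that |XY − YX| ≤ γ·|X|·|Y| for all X, Y ∈ 𝔤. Then for every 𝔤-valued 1-form A, |⟨Z(A) + [Φ,A], A⟩| ≤ √((n−1)/n)·√(|Z|² + 2γ²·|Φ|²)·|A|². -/

import Mathlib

open Matrix Finset

/-- The inner product `⟨X,Y⟩ = -(1/2)·tr(XY)` on real skew-symmetric `m×m` matrices `𝔤`. -/
noncomputable def gInner {m : ℕ} (X Y : Matrix (Fin m) (Fin m) ℝ) : ℝ :=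
  -(1/2) * (X * Y).trace

/-- The norm `|X| = ⟨X,X⟩^{1/2}` on `𝔤`. -/
noncomputable def gNorm {m : ℕ} (X : Matrix (Fin m) (Fin m) ℝ) : ℝ :=
  Real.sqrt (gInner X X)

/-- The inner product `⟨P,Q⟩ = -(1/2)·Σᵢ tr(Pᵢ Qᵢ)` on `𝔤`-valued 1-forms. -/
noncomputable def oneInner {n m : ℕ} (P Q : Fin n → Matrix (Fin m) (Fin m) ℝ) : ℝ :=
  -(1/2) * ∑ i, (P i * Q i).trace

/-- The norm on `𝔤`-valued 1-forms. -/
noncomputable def oneNorm {n m : ℕ} (A : Fin n → Matrix (Fin m) (Fin m) ℝ) : ℝ :=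
  Real.sqrt (oneInner A A)

/-- The inner product `⟨R,S⟩ = -(1/4)·Σᵢⱼ tr(Rᵢⱼ Sᵢⱼ)` on `𝔤`-valued 2-forms. -/
noncomputable def twoInner {n m : ℕ} (R S : Fin n → Fin n → Matrix (Fin m) (Fin m) ℝ) : ℝ :=
  -(1/4) * ∑ i, ∑ j, (R i j * S i j).trace

/-- The norm on `𝔤`-valued 2-forms. -/
noncomputable def twoNorm {n m : ℕ} (Φ : Fin n → Fin n → Matrix (Fin m) (Fin m) ℝ) : ℝ :=
  Real.sqrt (twoInner Φ Φ)

/-- Action of a real `n×n` matrix `Z` on a `𝔤`-valued 1-form: `(Z(A))ᵢ = Σⱼ Zᵢⱼ Aⱼ`. -/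
noncomputable def zAct {n m : ℕ} (Z : Matrix (Fin n) (Fin n) ℝ)
    (A : Fin n → Matrix (Fin m) (Fin m) ℝ) : Fin n → Matrix (Fin m) (Fin m) ℝ :=
  fun i => ∑ j, Z i j • A j

/-- Action of a `𝔤`-valued 2-form on a `𝔤`-valued 1-form:
`([Φ,A])ᵢ = Σⱼ (Φⱼᵢ Aⱼ − Aⱼ Φⱼᵢ)`. -/
noncomputable def phiAct {n m : ℕ} (Φ : Fin n → Fin n → Matrix (Fin m) (Fin m) ℝ)
    (A : Fin n → Matrix (Fin m) (Fin m) ℝ) : Fin n → Matrix (Fin m) (Fin m) ℝ :=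
  fun i => ∑ j, (Φ j i * A j - A j * Φ j i)

/-- The bracket of 𝔤-valued 1-forms: `[A,B]ᵢⱼ = Aᵢ Bⱼ − Bⱼ Aᵢ`. -/
noncomputable def oneBracket {n m : ℕ} (A B : Fin n → Matrix (Fin m) (Fin m) ℝ) :
    Fin n → Fin n → Matrix (Fin m) (Fin m) ℝ :=
  fun i j => A i * B j - B j * A i

/-- Frobenius norm of a real `n×n` matrix. -/
noncomputable def frobNorm {n : ℕ} (Z : Matrix (Fin n) (Fin n) ℝ) : ℝ :=
  Real.sqrt (∑ i, ∑ j, Z i j ^ 2)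


section Aux
variable {m : ℕ}

lemma gInner_eq_sum (X Y : Matrix (Fin m) (Fin m) ℝ) (hY : Yᵀ = -Y) :
    gInner X Y = (1/2) * ∑ i, ∑ j, X i j * Y i j := by
  have hy : ∀ i j : Fin m, Y j i = -(Y i j) := fun i j => by
    have := congrFun (congrFun hY i) j
    simpa using this
  have h1 : (X * Y).trace = ∑ i, ∑ j, X i j * Y j i := by
    simp [Matrix.trace, Matrix.mul_apply]
  rw [gInner, h1]
  rw [Finset.sum_congr rfl fun i _ => Finset.sum_congr rfl fun j _ => by rw [hy i j]]
  simp [Finset.sum_neg_distrib]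

lemma gInner_comm (X Y : Matrix (Fin m) (Fin m) ℝ) : gInner X Y = gInner Y X := by
  rw [gInner, gInner, Matrix.trace_mul_comm]

lemma gInner_self_nonneg (X : Matrix (Fin m) (Fin m) ℝ) (hX : Xᵀ = -X) : 0 ≤ gInner X X := by
  rw [gInner_eq_sum X X hX]
  exact mul_nonneg (by norm_num)
    (Finset.sum_nonneg fun i _ => Finset.sum_nonneg fun j _ => mul_self_nonneg _)

lemma gNorm_sq (X : Matrix (Fin m) (Fin m) ℝ) (hX : Xᵀ = -X) : gNorm X ^ 2 = gInner X X :=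
  Real.sq_sqrt (gInner_self_nonneg X hX)

lemma gInner_self_eq_zero (X : Matrix (Fin m) (Fin m) ℝ) (hX : Xᵀ = -X)
    (h : gInner X X = 0) : X = 0 := by
  rw [gInner_eq_sum X X hX] at h
  have h2 : ∑ i, ∑ j, X i j * X i j = 0 := by linarith
  ext i j
  have hnn : ∀ i ∈ (Finset.univ : Finset (Fin m)), 0 ≤ ∑ j, X i j * X i j :=
    fun i _ => Finset.sum_nonneg fun j _ => mul_self_nonneg _
  have h3 := (Finset.sum_eq_zero_iff_of_nonneg hnn).1 h2 i (Finset.mem_univ i)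
  have h4 := (Finset.sum_eq_zero_iff_of_nonneg fun j _ => mul_self_nonneg (X i j)).1 h3 j
    (Finset.mem_univ j)
  have := mul_self_eq_zero.1 h4
  simpa using this

lemma gInner_sub_left (X Y Z : Matrix (Fin m) (Fin m) ℝ) :
    gInner (X - Y) Z = gInner X Z - gInner Y Z := by
  simp [gInner, Matrix.sub_mul]; ring

lemma gInner_sub_right (X Y Z : Matrix (Fin m) (Fin m) ℝ) :
    gInner X (Y - Z) = gInner X Y - gInner X Z := by
  simp [gInner, Matrix.mul_sub]; ring

lemma gInner_smul_left (c : ℝ) (X Y : Matrix (Fin m) (Fin m) ℝ) :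
    gInner (c • X) Y = c * gInner X Y := by
  simp [gInner, Matrix.smul_mul]; ring

lemma gInner_smul_right (c : ℝ) (X Y : Matrix (Fin m) (Fin m) ℝ) :
    gInner X (c • Y) = c * gInner X Y := by
  simp [gInner, Matrix.mul_smul]; ring

lemma gInner_sq_le (X Y : Matrix (Fin m) (Fin m) ℝ) (hX : Xᵀ = -X) (hY : Yᵀ = -Y) :
    gInner X Y ^ 2 ≤ gInner X X * gInner Y Y := by
  rw [gInner_eq_sum X Y hY, gInner_eq_sum X X hX, gInner_eq_sum Y Y hY]
  have e1 : ∀ (U V : Matrix (Fin m) (Fin m) ℝ), ∑ i, ∑ j, U i j * V i j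
      = ∑ p ∈ Finset.univ ×ˢ Finset.univ, U p.1 p.2 * V p.1 p.2 :=
    fun U V => (Finset.sum_product' _ _ _).symm
  rw [e1 X Y, e1 X X, e1 Y Y]
  have key := Finset.sum_mul_sq_le_sq_mul_sq (Finset.univ ×ˢ Finset.univ)
    (fun p : Fin m × Fin m => X p.1 p.2) (fun p => Y p.1 p.2)
  simp only [pow_two] at key ⊢
  nlinarith [key]

lemma gInner_abs_le (X Y : Matrix (Fin m) (Fin m) ℝ) (hX : Xᵀ = -X) (hY : Yᵀ = -Y) :
    |gInner X Y| ≤ gNorm X * gNorm Y := by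
  have h := gInner_sq_le X Y hX hY
  have h2 := Real.abs_le_sqrt h
  rwa [Real.sqrt_mul (gInner_self_nonneg X hX)] at h2

end Aux

section Aux2
variable {m : ℕ}

lemma sqrt_cs2 (p q r s : ℝ) (hp : 0 ≤ p) (hq : 0 ≤ q) (hr : 0 ≤ r) (hs : 0 ≤ s) :
    Real.sqrt p * Real.sqrt q + Real.sqrt r * Real.sqrt s ≤
      Real.sqrt (p + r) * Real.sqrt (q + s) := by
  have hP := Real.sq_sqrt hp; have hQ := Real.sq_sqrt hq
  have hR := Real.sq_sqrt hr; have hS := Real.sq_sqrt hs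
  have hU := Real.sq_sqrt (by linarith : (0:ℝ) ≤ p + r)
  have hV := Real.sq_sqrt (by linarith : (0:ℝ) ≤ q + s)
  nlinarith [Real.sqrt_nonneg p, Real.sqrt_nonneg q, Real.sqrt_nonneg r, Real.sqrt_nonneg s,
    Real.sqrt_nonneg (p+r), Real.sqrt_nonneg (q+s),
    sq_nonneg (Real.sqrt p * Real.sqrt s - Real.sqrt r * Real.sqrt q),
    mul_nonneg (Real.sqrt_nonneg (p+r)) (Real.sqrt_nonneg (q+s)),
    mul_nonneg (mul_nonneg (Real.sqrt_nonneg p) (Real.sqrt_nonneg q))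
      (mul_nonneg (Real.sqrt_nonneg r) (Real.sqrt_nonneg s))]

lemma comm_bound {γ : ℝ} (hγ : 0 ≤ γ)
    (hbd : ∀ X Y : Matrix (Fin m) (Fin m) ℝ, Xᵀ = -X → Yᵀ = -Y →
      gNorm (X * Y - Y * X) ≤ γ * gNorm X * gNorm Y)
    (X Y : Matrix (Fin m) (Fin m) ℝ) (hX : Xᵀ = -X) (hY : Yᵀ = -Y) :
    gNorm (X * Y - Y * X) ≤
      γ * Real.sqrt (gInner X X * gInner Y Y - gInner X Y ^ 2) := by
  by_cases ha : gInner X X = 0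
  · have hX0 : X = 0 := gInner_self_eq_zero X hX ha
    have : X * Y - Y * X = 0 := by rw [hX0]; simp
    rw [this]
    have h0 : gNorm (0 : Matrix (Fin m) (Fin m) ℝ) = 0 := by
      simp [gNorm, gInner]
    rw [h0]
    positivity
  · have hapos : 0 < gInner X X :=
      lt_of_le_of_ne (gInner_self_nonneg X hX) (Ne.symm ha)
    set a := gInner X X with haa
    set g := gInner X Y with hg
    set Y' := Y - (g / a) • X with hY'def
    have hY' : Y'ᵀ = -Y' := by
      rw [hY'def, Matrix.transpose_sub, Matrix.transpose_smul, hX, hY]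
      module
    have hcomm : X * Y' - Y' * X = X * Y - Y * X := by
      rw [hY'def]
      simp only [Matrix.mul_sub, Matrix.sub_mul, Matrix.mul_smul, Matrix.smul_mul]
      abel
    have hbY' : gInner Y' Y' = gInner Y Y - g ^ 2 / a := by
      rw [hY'def]
      rw [gInner_sub_left, gInner_sub_right, gInner_sub_right,
        gInner_smul_left, gInner_smul_right, gInner_smul_right, gInner_smul_left,
        gInner_comm Y X]
      rw [← hg, ← haa]
      field_simp
      ring
    have step := hbd X Y' hX hY'
    rw [hcomm] at step
    refine step.trans (le_of_eq ?_)
    rw [gNorm, gNorm, mul_assoc, ← Real.sqrt_mul hapos.le, hbY']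
    congr 2
    field_simp
end Aux2


lemma oneInner_expand {n m : ℕ} (Z : Matrix (Fin n) (Fin n) ℝ)
    (Φ : Fin n → Fin n → Matrix (Fin m) (Fin m) ℝ)
    (A : Fin n → Matrix (Fin m) (Fin m) ℝ) :
    oneInner (zAct Z A + phiAct Φ A) A =
      (∑ i, ∑ j, Z i j * gInner (A i) (A j)) +
      ∑ i, ∑ j, gInner (Φ i j) (A i * A j - A j * A i) := by
  have key : ∀ i : Fin n, (((zAct Z A + phiAct Φ A) i) * A i).trace
      = (∑ j, Z i j * (A j * A i).trace)
        + ∑ j, (Φ j i * (A j * A i - A i * A j)).trace := by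
    intro i
    have h1 : (zAct Z A + phiAct Φ A) i = zAct Z A i + phiAct Φ A i := rfl
    rw [h1, Matrix.add_mul, Matrix.trace_add]
    congr 1
    · rw [zAct, Finset.sum_mul, Matrix.trace_sum]
      exact Finset.sum_congr rfl fun j _ => by
        rw [Matrix.smul_mul, Matrix.trace_smul]; rfl
    · rw [phiAct, Finset.sum_mul, Matrix.trace_sum]
      refine Finset.sum_congr rfl fun j _ => ?_
      rw [Matrix.sub_mul, Matrix.trace_sub, Matrix.mul_sub, Matrix.trace_sub]
      congr 1
      · rw [Matrix.mul_assoc]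
      · rw [Matrix.mul_assoc, Matrix.trace_mul_comm, Matrix.mul_assoc]
  rw [oneInner]
  rw [Finset.sum_congr rfl fun i _ => key i]
  rw [Finset.sum_add_distrib, mul_add]
  congr 1
  · rw [Finset.mul_sum]
    refine Finset.sum_congr rfl fun i _ => ?_
    rw [Finset.mul_sum]
    refine Finset.sum_congr rfl fun j _ => ?_
    rw [gInner, Matrix.trace_mul_comm]
    ring
  · rw [Finset.mul_sum, Finset.sum_comm]
    refine Finset.sum_congr rfl fun i _ => ?_
    rw [Finset.mul_sum]
    refine Finset.sum_congr rfl fun j _ => ?_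
    rw [gInner]

lemma sum_delta {n : ℕ} (i : Fin n) (f : Fin n → ℝ) :
    ∑ j, f j * (if i = j then (1:ℝ) else 0) = f i := by
  rw [Finset.sum_eq_single i]
  · simp
  · intro j _ hj
    simp [Ne.symm hj]
  · intro h
    exact absurd (Finset.mem_univ i) h

lemma cs_double {n : ℕ} (f g : Fin n → Fin n → ℝ) :
    ∑ i, ∑ j, f i j * g i j ≤
      Real.sqrt (∑ i, ∑ j, f i j ^ 2) * Real.sqrt (∑ i, ∑ j, g i j ^ 2) := by
  have e1 : ∑ i, ∑ j, f i j * g i j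
      = ∑ p ∈ Finset.univ ×ˢ Finset.univ, f p.1 p.2 * g p.1 p.2 :=
    (Finset.sum_product' Finset.univ Finset.univ (fun i j => f i j * g i j)).symm
  have e2 : ∑ p ∈ Finset.univ ×ˢ Finset.univ, (fun p : Fin n × Fin n => f p.1 p.2) p ^ 2
      = ∑ i, ∑ j, f i j ^ 2 :=
    Finset.sum_product' Finset.univ Finset.univ (fun i j => f i j ^ 2)
  have e3 : ∑ p ∈ Finset.univ ×ˢ Finset.univ, (fun p : Fin n × Fin n => g p.1 p.2) p ^ 2
      = ∑ i, ∑ j, g i j ^ 2 :=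
    Finset.sum_product' Finset.univ Finset.univ (fun i j => g i j ^ 2)
  have key := Real.sum_mul_le_sqrt_mul_sqrt (Finset.univ ×ˢ Finset.univ)
    (fun p : Fin n × Fin n => f p.1 p.2) (fun p => g p.1 p.2)
  rw [e2, e3] at key
  rw [e1]
  exact key

/-- Estimate for the bilinear form `𝓑 = Z + [Φ,·]` on `𝔤`-valued 1-forms:
`|⟨Z(A) + [Φ,A], A⟩| ≤ √((n−1)/n)·√(|Z|² + 2γ²·|Φ|²)·|A|²`. -/
theorem bilinear_form_estimate (m n : ℕ) (hm : 1 ≤ m) (hn : 1 ≤ n)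
    (Z : Matrix (Fin n) (Fin n) ℝ) (hZsymm : Zᵀ = Z) (hZtr : Z.trace = 0)
    (Φ : Fin n → Fin n → Matrix (Fin m) (Fin m) ℝ)
    (hΦskew : ∀ i j, (Φ i j)ᵀ = -(Φ i j))
    (hΦalt : ∀ i j, Φ i j = -(Φ j i))
    (γ : ℝ) (hγ : 0 ≤ γ)
    (hbd : ∀ X Y : Matrix (Fin m) (Fin m) ℝ, Xᵀ = -X → Yᵀ = -Y →
      gNorm (X * Y - Y * X) ≤ γ * gNorm X * gNorm Y)
    (A : Fin n → Matrix (Fin m) (Fin m) ℝ) (hA : ∀ i, (A i)ᵀ = -(A i)) :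
    |oneInner (zAct Z A + phiAct Φ A) A| ≤
      Real.sqrt (((n : ℝ) - 1) / n) *
        Real.sqrt (frobNorm Z ^ 2 + 2 * γ ^ 2 * twoNorm Φ ^ 2) * oneNorm A ^ 2 := by
  have hnpos : (0:ℝ) < n := by exact_mod_cast hn
  have hn1 : (0:ℝ) ≤ ((n:ℝ) - 1) / n := by
    apply div_nonneg _ hnpos.le
    have : (1:ℝ) ≤ n := by exact_mod_cast hn
    linarith
  have hBskew : ∀ i j, (A i * A j - A j * A i)ᵀ = -(A i * A j - A j * A i) := by
    intro i j
    rw [Matrix.transpose_sub, Matrix.transpose_mul, Matrix.transpose_mul, hA i, hA j]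
    simp
  have htrZ : ∑ i, Z i i = 0 := by simpa [Matrix.trace, Matrix.diag] using hZtr
  set t : ℝ := ∑ k, gInner (A k) (A k) with htdef
  have htnn : 0 ≤ t := Finset.sum_nonneg fun k _ => gInner_self_nonneg (A k) (hA k)
  have hwnn : ∀ i j : Fin n,
      0 ≤ gInner (A i) (A i) * gInner (A j) (A j) - gInner (A i) (A j) ^ 2 :=
    fun i j => sub_nonneg.2 (gInner_sq_le (A i) (A j) (hA i) (hA j))
  -- Step B : the centered expansion
  have hT : oneInner (zAct Z A + phiAct Φ A) A
      = ∑ i, ∑ j, (Z i j * (gInner (A i) (A j) - t / (n:ℝ) * (if i = j then (1:ℝ) else 0))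
          + gInner (Φ i j) (A i * A j - A j * A i)) := by
    rw [oneInner_expand]
    have hsplit : ∀ i j : Fin n,
        Z i j * (gInner (A i) (A j) - t / (n:ℝ) * (if i = j then (1:ℝ) else 0))
          + gInner (Φ i j) (A i * A j - A j * A i)
        = (Z i j * gInner (A i) (A j) + gInner (Φ i j) (A i * A j - A j * A i))
          - (Z i j * (t / (n:ℝ))) * (if i = j then (1:ℝ) else 0) := by
      intro i j; ring
    have hz : ∑ i, ∑ j, (Z i j * (t / (n:ℝ))) * (if i = j then (1:ℝ) else 0) = 0 := by
      rw [Finset.sum_congr rfl fun i _ => sum_delta i (fun j => Z i j * (t / (n:ℝ)))]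
      rw [← Finset.sum_mul, htrZ, zero_mul]
    rw [Finset.sum_congr rfl fun i _ => Finset.sum_congr rfl fun j _ => hsplit i j]
    rw [Finset.sum_congr rfl fun i _ => Finset.sum_sub_distrib _ _]
    rw [Finset.sum_sub_distrib, hz, sub_zero]
    rw [Finset.sum_congr rfl fun x _ => Finset.sum_add_distrib, Finset.sum_add_distrib]
  -- Step C : pointwise bounds
  have step1 : |oneInner (zAct Z A + phiAct Φ A) A|
      ≤ (∑ i, ∑ j, |Z i j| * |gInner (A i) (A j) - t / (n:ℝ) * (if i = j then (1:ℝ) else 0)|)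
        + ∑ i, ∑ j, (γ * gNorm (Φ i j)) * Real.sqrt (gInner (A i) (A i) * gInner (A j) (A j)
            - gInner (A i) (A j) ^ 2) := by
    rw [hT, ← Finset.sum_add_distrib]
    rw [Finset.sum_congr rfl fun i _ => (Finset.sum_add_distrib).symm]
    refine (Finset.abs_sum_le_sum_abs _ _).trans ?_
    refine Finset.sum_le_sum fun i _ => ?_
    refine (Finset.abs_sum_le_sum_abs _ _).trans ?_
    refine Finset.sum_le_sum fun j _ => ?_
    refine (abs_add_le _ _).trans ?_
    refine add_le_add (abs_mul _ _).le ?_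
    calc |gInner (Φ i j) (A i * A j - A j * A i)|
        ≤ gNorm (Φ i j) * gNorm (A i * A j - A j * A i) :=
          gInner_abs_le _ _ (hΦskew i j) (hBskew i j)
      _ ≤ gNorm (Φ i j) * (γ * Real.sqrt (gInner (A i) (A i) * gInner (A j) (A j)
            - gInner (A i) (A j) ^ 2)) := by
          exact mul_le_mul_of_nonneg_left (comm_bound hγ hbd (A i) (A j) (hA i) (hA j))
            (Real.sqrt_nonneg _)
      _ = (γ * gNorm (Φ i j)) * Real.sqrt (gInner (A i) (A i) * gInner (A j) (A j)
            - gInner (A i) (A j) ^ 2) := by ring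
  -- Step D : Cauchy-Schwarz
  have c1 := cs_double (fun i j => |Z i j|)
    (fun i j => |gInner (A i) (A j) - t / (n:ℝ) * (if i = j then (1:ℝ) else 0)|)
  simp only [sq_abs] at c1
  have c2 := cs_double (fun i j => γ * gNorm (Φ i j))
    (fun i j => Real.sqrt (gInner (A i) (A i) * gInner (A j) (A j) - gInner (A i) (A j) ^ 2))
  have sqnonneg : ∀ (f : Fin n → Fin n → ℝ), (0:ℝ) ≤ ∑ i, ∑ j, f i j ^ 2 :=
    fun f => Finset.sum_nonneg fun i _ => Finset.sum_nonneg fun j _ => sq_nonneg _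
  have comb := sqrt_cs2 (∑ i, ∑ j, Z i j ^ 2)
    (∑ i, ∑ j, (gInner (A i) (A j) - t / (n:ℝ) * (if i = j then (1:ℝ) else 0)) ^ 2)
    (∑ i, ∑ j, (γ * gNorm (Φ i j)) ^ 2)
    (∑ i, ∑ j, (Real.sqrt (gInner (A i) (A i) * gInner (A j) (A j)
        - gInner (A i) (A j) ^ 2)) ^ 2)
    (sqnonneg _) (sqnonneg _) (sqnonneg _) (sqnonneg _)
  have step2 : |oneInner (zAct Z A + phiAct Φ A) A|
      ≤ Real.sqrt ((∑ i, ∑ j, Z i j ^ 2) + ∑ i, ∑ j, (γ * gNorm (Φ i j)) ^ 2)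
        * Real.sqrt ((∑ i, ∑ j,
            (gInner (A i) (A j) - t / (n:ℝ) * (if i = j then (1:ℝ) else 0)) ^ 2)
          + ∑ i, ∑ j, (Real.sqrt (gInner (A i) (A i) * gInner (A j) (A j)
              - gInner (A i) (A j) ^ 2)) ^ 2) := by
    refine step1.trans ?_
    refine (add_le_add c1 c2).trans ?_
    exact comb
  -- Step E : identify the first factor
  have hZfrob : ∑ i, ∑ j, Z i j ^ 2 = frobNorm Z ^ 2 := by
    rw [frobNorm, Real.sq_sqrt (sqnonneg (fun i j => Z i j))]
  have h2inner : twoInner Φ Φ = (1/2) * ∑ i, ∑ j, gInner (Φ i j) (Φ i j) := by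
    rw [twoInner]
    have : ∀ i : Fin n, ∑ j, gInner (Φ i j) (Φ i j) = -(1/2) * ∑ j, (Φ i j * Φ i j).trace := by
      intro i; rw [Finset.mul_sum]; rfl
    rw [Finset.sum_congr rfl fun i _ => this i, ← Finset.mul_sum]
    ring
  have h2nn : 0 ≤ twoInner Φ Φ := by
    rw [h2inner]
    exact mul_nonneg (by norm_num) (Finset.sum_nonneg fun i _ => Finset.sum_nonneg fun j _ =>
      gInner_self_nonneg _ (hΦskew i j))
  have hPhiSum : ∑ i, ∑ j, (γ * gNorm (Φ i j)) ^ 2 = 2 * γ ^ 2 * twoNorm Φ ^ 2 := by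
    have h1 : ∀ i j : Fin n, (γ * gNorm (Φ i j)) ^ 2 = γ ^ 2 * gInner (Φ i j) (Φ i j) := by
      intro i j; rw [mul_pow, gNorm_sq _ (hΦskew i j)]
    rw [Finset.sum_congr rfl fun i _ => Finset.sum_congr rfl fun j _ => h1 i j]
    have h2 : twoNorm Φ ^ 2 = twoInner Φ Φ := Real.sq_sqrt h2nn
    rw [Finset.sum_congr rfl fun i _ => (Finset.mul_sum _ _ _).symm, ← Finset.mul_sum,
      h2, h2inner]
    ring
  -- Step F : identify the second factor
  have hGh2 : ∑ i, ∑ j, (gInner (A i) (A j) - t / (n:ℝ) * (if i = j then (1:ℝ) else 0)) ^ 2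
      = (∑ i, ∑ j, gInner (A i) (A j) ^ 2) - t ^ 2 / n := by
    have per : ∀ i j : Fin n,
        (gInner (A i) (A j) - t / (n:ℝ) * (if i = j then (1:ℝ) else 0)) ^ 2
        = gInner (A i) (A j) ^ 2
          - (2 * (t / (n:ℝ)) * gInner (A i) (A j) - (t / (n:ℝ)) ^ 2) * (if i = j then (1:ℝ) else 0) := by
      intro i j; by_cases h : i = j <;> simp [h] <;> ring
    rw [Finset.sum_congr rfl fun i _ => Finset.sum_congr rfl fun j _ => per i j]
    rw [Finset.sum_congr rfl fun i _ => Finset.sum_sub_distrib _ _, Finset.sum_sub_distrib]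
    have hδ : ∑ i, ∑ j, (2 * (t / (n:ℝ)) * gInner (A i) (A j) - (t / (n:ℝ)) ^ 2)
        * (if i = j then (1:ℝ) else 0)
        = 2 * (t / (n:ℝ)) * t - (n:ℝ) * (t / (n:ℝ)) ^ 2 := by
      rw [Finset.sum_congr rfl fun i _ =>
        sum_delta i (fun j => 2 * (t / (n:ℝ)) * gInner (A i) (A j) - (t / (n:ℝ)) ^ 2)]
      rw [Finset.sum_sub_distrib, ← Finset.mul_sum, ← htdef, Finset.sum_const]
      simp [Finset.card_univ]
    rw [hδ]
    have : (n:ℝ) ≠ 0 := hnpos.ne'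
    field_simp
    ring
  have hprod : ∑ i, ∑ j, gInner (A i) (A i) * gInner (A j) (A j) = t * t := by
    rw [Finset.sum_congr rfl fun i _ => (Finset.mul_sum _ _ _).symm, ← Finset.sum_mul, ← htdef]
  have hw2 : ∑ i, ∑ j, (Real.sqrt (gInner (A i) (A i) * gInner (A j) (A j)
      - gInner (A i) (A j) ^ 2)) ^ 2
      = t * t - ∑ i, ∑ j, gInner (A i) (A j) ^ 2 := by
    rw [Finset.sum_congr rfl fun i _ => Finset.sum_congr rfl fun j _ =>
      Real.sq_sqrt (hwnn i j)]
    rw [Finset.sum_congr rfl fun i _ => Finset.sum_sub_distrib _ _, Finset.sum_sub_distrib, hprod]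
  have hsecond : (∑ i, ∑ j,
        (gInner (A i) (A j) - t / (n:ℝ) * (if i = j then (1:ℝ) else 0)) ^ 2)
      + ∑ i, ∑ j, (Real.sqrt (gInner (A i) (A i) * gInner (A j) (A j)
          - gInner (A i) (A j) ^ 2)) ^ 2
      = (((n:ℝ) - 1) / n) * t ^ 2 := by
    rw [hGh2, hw2]
    have : (n:ℝ) ≠ 0 := hnpos.ne'
    field_simp
    ring
  -- conclusion
  have ht_eq : oneNorm A ^ 2 = t := by
    have hone : oneInner A A = t := by
      rw [htdef, oneInner, Finset.mul_sum]
      exact Finset.sum_congr rfl fun i _ => rfl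
    rw [oneNorm, hone, Real.sq_sqrt htnn]
  rw [ht_eq]
  refine step2.trans (le_of_eq ?_)
  rw [hZfrob, hPhiSum, hsecond, Real.sqrt_mul hn1, Real.sqrt_sq htnn]
  ring
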